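/- Let ℓ = [[det h, 0],[n, h]] ∈ L and let b(f_ℓ, ε) be the [ℓ]-attracting region. Then for any x = Rv ∈ b(f_ℓ, ε) with ‖v‖ = 1: (i) ‖Π_{ℓ⁻¹E₁, E₁^⊥}(v)‖ ≥ ε; (ii) d(x, ℓ⁻¹E₁) ≥ ε · d(ℓ⁻¹E₁, E₁^⊥); and (iii) the norm of the linear form satisfies 1 ≤ ‖f_ℓ‖ ≤ 1/d(ℓ⁻¹E₁, E₁^⊥). -/
import Mathlib


/- STATEMENT 10: Let ℓ = [[det h, 0],[n, h]] ∈ L and b(f_ℓ, ε) the [ℓ]-attracting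
region. For unit v with ℝv ∈ b(f_ℓ, ε): (i) ‖Π_{ℓ⁻¹E₁,E₁^⊥}(v)‖ ≥ ε;
(ii) d(ℝv, ℓ⁻¹E₁) ≥ ε·d(ℓ⁻¹E₁, E₁^⊥); (iii) 1 ≤ ‖f_ℓ‖ ≤ 1/d(ℓ⁻¹E₁, E₁^⊥). -/

noncomputable section

/-- Euclidean norm of a vector. -/
def en {m : ℕ} (v : Fin m → ℝ) : ℝ := Real.sqrt (∑ i, v i ^ 2)

/-- Euclidean inner product. -/
def ip {m : ℕ} (v w : Fin m → ℝ) : ℝ := ∑ i, v i * w i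

/-- Projective distance `d(ℝv, ℝw) = ‖v ∧ w‖ / (‖v‖ ‖w‖)`. -/
def pd {m : ℕ} (v w : Fin m → ℝ) : ℝ :=
  Real.sqrt (en v ^ 2 * en w ^ 2 - ip v w ^ 2) / (en v * en w)

/-- The element `ℓ = [[det h, 0],[n, h]]` of the group `L ⊂ SL₃(ℝ)`. -/
def Lmat (h : Matrix (Fin 2) (Fin 2) ℝ) (n : Fin 2 → ℝ) :
    Matrix (Fin 3) (Fin 3) ℝ :=
  !![h.det, 0, 0; n 0, h 0 0, h 0 1; n 1, h 1 0, h 1 1]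

/-- Operator norm of a 2×2 matrix (supremum of `‖h x‖` over unit vectors). -/
def opn (h : Matrix (Fin 2) (Fin 2) ℝ) : ℝ :=
  sSup ((fun x => en (h.mulVec x)) '' {x : Fin 2 → ℝ | en x = 1})

/-- The linear form `f_ℓ(v) = f_h(Π_{ℓ⁻¹E₁,E₁^⊥}(v))`, where
`f_h = ⟨·, u⟩` is the norm-one linear form on `E₁^⊥ ≅ ℝ²` with kernel `H_h⁻`
(`u` being a unit top right-singular vector of `h`), and
`Π_{ℓ⁻¹E₁,E₁^⊥}(a,b,c) = (b,c) + a·h⁻¹n`. -/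
def flform (h : Matrix (Fin 2) (Fin 2) ℝ) (nv u : Fin 2 → ℝ) (v : Fin 3 → ℝ) : ℝ :=
  ip (fun i : Fin 2 => v i.succ + v 0 * h⁻¹.mulVec nv i) u

/-- The norm `‖f_ℓ‖` of the linear form `f_ℓ`. -/
def flnorm (h : Matrix (Fin 2) (Fin 2) ℝ) (nv u : Fin 2 → ℝ) : ℝ :=
  Real.sqrt (1 + ip (h⁻¹.mulVec nv) u ^ 2)

private lemma sqrt_eq_one_sq {s : ℝ} (h0 : 0 ≤ s) (h1 : Real.sqrt s = 1) : s = 1 := by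
  rw [← Real.sq_sqrt h0, h1]; norm_num

private lemma cs_two (a b x y : ℝ) (hxy : x ^ 2 + y ^ 2 = 1) :
    (a * x + b * y) ^ 2 ≤ a ^ 2 + b ^ 2 := by
  nlinarith [sq_nonneg (a * y - b * x)]

private lemma key_ineq (e d m0 m1 v0 v1 v2 : ℝ) (hd2 : d * d = 1)
    (hv2 : v0 ^ 2 + v1 ^ 2 + v2 ^ 2 = 1)
    (h1 : e ^ 2 ≤ (v1 + v0 * m0) ^ 2 + (v2 + v0 * m1) ^ 2) :
    e ^ 2 ≤ (1 + (m0 ^ 2 + m1 ^ 2)) - (d * (v0 - v1 * m0 - v2 * m1)) ^ 2 := by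
  have hdx : (d * (v0 - v1 * m0 - v2 * m1)) ^ 2 = (v0 - v1 * m0 - v2 * m1) ^ 2 := by
    linear_combination (v0 - v1 * m0 - v2 * m1) ^ 2 * hd2
  have hiden : (1 + (m0 ^ 2 + m1 ^ 2)) - (v0 - v1 * m0 - v2 * m1) ^ 2 =
      (v1 + v0 * m0) ^ 2 + (v2 + v0 * m1) ^ 2 + (v1 * m1 - v2 * m0) ^ 2 := by
    linear_combination (-(1 + m0 ^ 2 + m1 ^ 2)) * hv2
  rw [hdx, hiden]
  nlinarith [sq_nonneg (v1 * m1 - v2 * m0)]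

set_option maxHeartbeats 1600000 in
theorem attracting_region_basic_estimates
    (ε : ℝ) (hε : 0 < ε)
    (h : Matrix (Fin 2) (Fin 2) ℝ) (hdet : h.det = 1 ∨ h.det = -1)
    (nv : Fin 2 → ℝ)
    (u : Fin 2 → ℝ) (hu : en u = 1) (humax : en (h.mulVec u) = opn h)
    (v : Fin 3 → ℝ) (hv : en v = 1)
    -- `ℝv ∈ b(f_ℓ, ε)`
    (hmem : ε * flnorm h nv u ≤ |flform h nv u v|) :
    ε ≤ en (fun i : Fin 2 => v i.succ + v 0 * h⁻¹.mulVec nv i) ∧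
      ε * (|((Lmat h nv)⁻¹.mulVec ![1, 0, 0]) 0| / en ((Lmat h nv)⁻¹.mulVec ![1, 0, 0]))
        ≤ pd v ((Lmat h nv)⁻¹.mulVec ![1, 0, 0]) ∧
      1 ≤ flnorm h nv u ∧
      flnorm h nv u ≤
        en ((Lmat h nv)⁻¹.mulVec ![1, 0, 0]) / |((Lmat h nv)⁻¹.mulVec ![1, 0, 0]) 0| := by
  have hd2 : h.det * h.det = 1 := by rcases hdet with h1 | h1 <;> rw [h1] <;> norm_num
  have hdu : IsUnit h.det := by rcases hdet with h1 | h1 <;> simp [h1]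
  set d := h.det with hd
  set m : Fin 2 → ℝ := h⁻¹.mulVec nv with hm
  set z : Fin 2 → ℝ := fun i => v i.succ + v 0 * m i with hz
  -- unit vectors
  have hu2 : u 0 ^ 2 + u 1 ^ 2 = 1 := by
    have h0 : (0:ℝ) ≤ u 0 ^ 2 + u 1 ^ 2 := by positivity
    have := hu
    unfold en at this
    rw [Fin.sum_univ_two] at this
    exact sqrt_eq_one_sq h0 this
  have hv2 : v 0 ^ 2 + v 1 ^ 2 + v 2 ^ 2 = 1 := by
    have h0 : (0:ℝ) ≤ v 0 ^ 2 + v 1 ^ 2 + v 2 ^ 2 := by positivity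
    have := hv
    unfold en at this
    rw [Fin.sum_univ_three] at this
    exact sqrt_eq_one_sq h0 this
  -- h * h⁻¹ = 1 so h.mulVec m = nv
  have hmw : h.mulVec m = nv := by
    rw [hm, Matrix.mulVec_mulVec, Matrix.mul_nonsing_inv h hdu, Matrix.one_mulVec]
  have hmw0 : h 0 0 * m 0 + h 0 1 * m 1 = nv 0 := by
    have := congrFun hmw 0
    simpa [Matrix.mulVec, dotProduct, Fin.sum_univ_two] using this
  have hmw1 : h 1 0 * m 0 + h 1 1 * m 1 = nv 1 := by
    have := congrFun hmw 1
    simpa [Matrix.mulVec, dotProduct, Fin.sum_univ_two] using this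
  -- the vector w = ℓ⁻¹ E₁
  set w : Fin 3 → ℝ := ![d, -(d * m 0), -(d * m 1)] with hwdef
  have hdetfin : h 0 0 * h 1 1 - h 0 1 * h 1 0 = d := (Matrix.det_fin_two h).symm
  have hLw : (Lmat h nv).mulVec w = ![1, 0, 0] := by
    funext i
    fin_cases i <;>
      simp [Lmat, Matrix.mulVec, dotProduct, Fin.sum_univ_three, hwdef,
        Matrix.det_fin_two]
    · linear_combination d * hdetfin + hd2
    · linear_combination (-d) * hmw0
    · linear_combination (-d) * hmw1
  have hdetL : (Lmat h nv).det = 1 := by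
    have : (Lmat h nv).det = d * (h 0 0 * h 1 1 - h 0 1 * h 1 0) := by
      simp [Lmat, Matrix.det_fin_three]; ring
    rw [this]
    have : h 0 0 * h 1 1 - h 0 1 * h 1 0 = d := (Matrix.det_fin_two h).symm
    rw [this]; exact hd2
  have hw : (Lmat h nv)⁻¹.mulVec ![1, 0, 0] = w := by
    rw [← hLw, Matrix.mulVec_mulVec,
      Matrix.nonsing_inv_mul _ (by simp [hdetL]), Matrix.one_mulVec]
  rw [hw]
  have habsd : |d| = 1 := by rcases hdet with h1 | h1 <;> rw [h1] <;> norm_num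
  have hw0 : w 0 = d := by simp [hwdef]
  have henw : en w = Real.sqrt (1 + (m 0 ^ 2 + m 1 ^ 2)) := by
    unfold en
    rw [Fin.sum_univ_three]
    congr 1
    simp only [hwdef]
    simp only [Matrix.cons_val_zero, Matrix.cons_val_one, Matrix.head_cons,
      Matrix.cons_val_two, Matrix.tail_cons]
    linear_combination (1 + m 0 ^ 2 + m 1 ^ 2) * hd2
  have henw1 : 1 ≤ en w := by
    rw [henw]
    calc (1:ℝ) = Real.sqrt 1 := by simp
      _ ≤ _ := Real.sqrt_le_sqrt (by nlinarith [sq_nonneg (m 0), sq_nonneg (m 1)])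
  have henwpos : 0 < en w := lt_of_lt_of_le one_pos henw1
  -- flnorm basics
  set c : ℝ := ip m u with hc
  have hfl : flnorm h nv u = Real.sqrt (1 + c ^ 2) := rfl
  have hfl1 : 1 ≤ flnorm h nv u := by
    rw [hfl]
    calc (1:ℝ) = Real.sqrt 1 := by simp
      _ ≤ _ := Real.sqrt_le_sqrt (by nlinarith [sq_nonneg c])
  -- definitional facts, then make the local definitions opaque
  have hform : flform h nv u v = z 0 * u 0 + z 1 * u 1 := by
    unfold flform ip
    rw [Fin.sum_univ_two]
  have hz0 : z 0 = v 1 + v 0 * m 0 := by simp [hz]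
  have hz1 : z 1 = v 2 + v 0 * m 1 := by simp [hz]
  have hcuv : c = m 0 * u 0 + m 1 * u 1 := by
    rw [hc]; unfold ip; rw [Fin.sum_univ_two]
  have hipvw : ip v w = d * (v 0 - v 1 * m 0 - v 2 * m 1) := by
    unfold ip
    rw [Fin.sum_univ_three]
    simp [hwdef]; ring
  have henz : en z = Real.sqrt (z 0 ^ 2 + z 1 ^ 2) := by
    unfold en; rw [Fin.sum_univ_two]
  have henv3 : en v = Real.sqrt (v 0 ^ 2 + v 1 ^ 2 + v 2 ^ 2) := by
    unfold en; rw [Fin.sum_univ_three]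
  clear_value z m c w d
  clear hm hz hc hwdef hd hdu hmw humax
  -- (i)
  have henz2 : en z ^ 2 = z 0 ^ 2 + z 1 ^ 2 := by
    rw [henz, Real.sq_sqrt (by positivity)]
  have hCS : |flform h nv u v| ≤ en z := by
    have h2 : (flform h nv u v) ^ 2 ≤ en z ^ 2 := by
      rw [hform, henz2]
      exact cs_two (z 0) (z 1) (u 0) (u 1) hu2
    calc |flform h nv u v| = Real.sqrt ((flform h nv u v) ^ 2) := by
            rw [Real.sqrt_sq_eq_abs]
      _ ≤ Real.sqrt (en z ^ 2) := Real.sqrt_le_sqrt h2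
      _ = en z := Real.sqrt_sq (by rw [henz]; positivity)
  have hi : ε ≤ en z := by
    have h1 : ε ≤ ε * flnorm h nv u := le_mul_of_one_le_right hε.le hfl1
    linarith [hmem]
  refine ⟨hi, ?_, hfl1, ?_⟩
  · -- (ii)
    have hd2' : d ^ 2 = 1 := by linear_combination hd2
    have henw2 : en w ^ 2 = 1 + (m 0 ^ 2 + m 1 ^ 2) := by
      rw [henw, Real.sq_sqrt (by positivity)]
    have hkey : ε ^ 2 ≤ en v ^ 2 * en w ^ 2 - ip v w ^ 2 := by
      have h1 : ε ^ 2 ≤ en z ^ 2 := pow_le_pow_left₀ hε.le hi 2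
      have h2 : en v ^ 2 = 1 := by
        rw [henv3, Real.sq_sqrt (by positivity), hv2]
      rw [h2, henw2, hipvw, one_mul]
      rw [henz2, hz0, hz1] at h1
      exact key_ineq ε d (m 0) (m 1) (v 0) (v 1) (v 2) hd2 hv2 h1
    have hεs : ε ≤ Real.sqrt (en v ^ 2 * en w ^ 2 - ip v w ^ 2) := by
      calc ε = Real.sqrt (ε ^ 2) := (Real.sqrt_sq hε.le).symm
        _ ≤ _ := Real.sqrt_le_sqrt hkey
    unfold pd
    rw [hw0, habsd]
    have henv : en v = 1 := hv
    rw [henv, one_mul, one_pow, one_mul, mul_one_div, div_le_div_iff₀ henwpos henwpos]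
    exact mul_le_mul_of_nonneg_right (by simpa [henv] using hεs) henwpos.le
  · -- (iii)
    rw [hw0, habsd, div_one]
    rw [hfl, henw]
    apply Real.sqrt_le_sqrt
    rw [hcuv]
    have := cs_two (m 0) (m 1) (u 0) (u 1) hu2
    linarith
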